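/- With u defined as in the explicit one-dimensional biwave solution formula (Theorem on ℝ × [0,∞) with data φ₀, φ₁, φ₂, φ₃), the initial conditions hold: u(x,0) = φ₀(x), ∂u/∂t(x,0) = φ₁(x), ∂²u/∂t²(x,0) = φ₂(x), and ∂³u/∂t³(x,0) = φ₃(x) for all x ∈ ℝ. -/

import Mathlib

/-!
Through the primitives `P₁ = ∫ φ₁`, `P₂ = ∫∫ φ₂`, `P₃ = ∫∫∫ φ₃` (based at `0`), `u(x, ·)` is a
combination of even pairs `F (x + s t) + F (x - s t)` (for `φ₀` and `P₂`) and odd pairs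
`F (x + s t) - F (x - s t)` (for `P₁` and `P₃`), with speeds `s = a, b`. The `n`-th `t`-derivative
of such a pair at `t = 0` is `(1 ± (-1)ⁿ) sⁿ F⁽ⁿ⁾(x)`, so only pairs of the parity of `n` survive,
and the weights in `a, b` are such that exactly the pair with `F⁽ⁿ⁾ = φₙ` survives, with total
weight `2ab(a² - b²)`.
-/

noncomputable def primitive (f : ℝ → ℝ) (y : ℝ) : ℝ := ∫ t in (0:ℝ)..y, f t

section Primitive

variable {f : ℝ → ℝ}

theorem hasDerivAt_primitive (hf : Continuous f) (y : ℝ) : HasDerivAt (primitive f) (f y) y :=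
  intervalIntegral.integral_hasDerivAt_right (hf.intervalIntegrable _ _)
    (hf.stronglyMeasurableAtFilter _ _) hf.continuousAt

theorem deriv_primitive (hf : Continuous f) : deriv (primitive f) = f :=
  funext fun y => (hasDerivAt_primitive hf y).deriv

theorem differentiable_primitive (hf : Continuous f) : Differentiable ℝ (primitive f) :=
  fun y => (hasDerivAt_primitive hf y).differentiableAt

theorem contDiff_primitive {n : ℕ} (hf : ContDiff ℝ n f) : ContDiff ℝ (n + 1) (primitive f) :=
  contDiff_succ_iff_deriv.mpr
    ⟨differentiable_primitive hf.continuous, by simp, by rwa [deriv_primitive hf.continuous]⟩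

theorem iteratedDeriv_succ_primitive (hf : Continuous f) (n : ℕ) :
    iteratedDeriv (n + 1) (primitive f) = iteratedDeriv n f := by
  rw [iteratedDeriv_succ', deriv_primitive hf]

theorem continuous_primitive (hf : Continuous f) : Continuous (primitive f) :=
  (differentiable_primitive hf).continuous

theorem intervalIntegral_eq_primitive_sub (hf : Continuous f) (p q : ℝ) :
    ∫ y in p..q, f y = primitive f q - primitive f p :=
  (intervalIntegral.integral_interval_sub_left (hf.intervalIntegrable _ _)
    (hf.intervalIntegrable _ _)).symm

end Primitive

section CompAffine

variable {𝕜 E : Type*} [NontriviallyNormedField 𝕜] [NormedAddCommGroup E] [NormedSpace 𝕜 E]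

theorem iteratedDeriv_comp_const_add_mul (F : 𝕜 → E) (x s : 𝕜) (n : ℕ) :
    iteratedDeriv n (fun t => F (x + s * t)) = fun t => s ^ n • iteratedDeriv n F (x + s * t) := by
  induction n with
  | zero => simp
  | succ n ih =>
    funext t
    rw [iteratedDeriv_succ, ih, iteratedDeriv_succ, deriv_fun_const_smul_field,
      deriv_comp_mul_left s (fun z => iteratedDeriv n F (x + z)), deriv_comp_const_add, smul_smul,
      pow_succ]

theorem iteratedDeriv_comp_const_sub_mul (F : 𝕜 → E) (x s : 𝕜) (n : ℕ) :
    iteratedDeriv n (fun t => F (x - s * t)) =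
      fun t => (-s) ^ n • iteratedDeriv n F (x - s * t) := by
  simpa [neg_mul, ← sub_eq_add_neg] using iteratedDeriv_comp_const_add_mul F x (-s) n

end CompAffine

def evenWave (F : ℝ → ℝ) (s x t : ℝ) : ℝ := F (x + s * t) + F (x - s * t)

def oddWave (F : ℝ → ℝ) (s x t : ℝ) : ℝ := F (x + s * t) - F (x - s * t)

section Waves

variable {F : ℝ → ℝ} {n : ℕ}

@[fun_prop]
theorem ContDiff.evenWave (hF : ContDiff ℝ n F) (s x : ℝ) : ContDiff ℝ n (evenWave F s x) := by
  unfold _root_.evenWave; fun_prop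

@[fun_prop]
theorem ContDiff.oddWave (hF : ContDiff ℝ n F) (s x : ℝ) : ContDiff ℝ n (oddWave F s x) := by
  unfold _root_.oddWave; fun_prop

theorem iteratedDeriv_evenWave_zero (hF : ContDiff ℝ n F) (s x : ℝ) :
    iteratedDeriv n (evenWave F s x) 0 = (1 + (-1) ^ n) * s ^ n * iteratedDeriv n F x := by
  unfold evenWave
  rw [iteratedDeriv_fun_add (by fun_prop) (by fun_prop),
    iteratedDeriv_comp_const_add_mul, iteratedDeriv_comp_const_sub_mul]
  simp only [smul_eq_mul, mul_zero, add_zero, sub_zero, neg_pow s]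
  ring

theorem iteratedDeriv_oddWave_zero (hF : ContDiff ℝ n F) (s x : ℝ) :
    iteratedDeriv n (oddWave F s x) 0 = (1 - (-1) ^ n) * s ^ n * iteratedDeriv n F x := by
  unfold oddWave
  rw [iteratedDeriv_fun_sub (by fun_prop) (by fun_prop),
    iteratedDeriv_comp_const_add_mul, iteratedDeriv_comp_const_sub_mul]
  simp only [smul_eq_mul, mul_zero, add_zero, sub_zero, neg_pow s]
  ring

end Waves

noncomputable def biwaveFormula (a b : ℝ) (P₀ P₁ P₂ P₃ : ℝ → ℝ) (x t : ℝ) : ℝ :=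
  (-(b ^ 3) * oddWave P₁ a x t + a ^ 3 * oddWave P₁ b x t
    + a * b * (evenWave P₂ a x t - evenWave P₂ b x t)
    + b * oddWave P₃ a x t - a * oddWave P₃ b x t
    - a * b ^ 3 * evenWave P₀ a x t + a ^ 3 * b * evenWave P₀ b x t) / (2 * a * b * (a ^ 2 - b ^ 2))

theorem iteratedDeriv_biwaveFormula_zero {n : ℕ} {P₀ P₁ P₂ P₃ : ℝ → ℝ} (h₀ : ContDiff ℝ n P₀)
    (h₁ : ContDiff ℝ n P₁) (h₂ : ContDiff ℝ n P₂) (h₃ : ContDiff ℝ n P₃) (a b x : ℝ) :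
    iteratedDeriv n (biwaveFormula a b P₀ P₁ P₂ P₃ x) 0 =
      ((1 - (-1) ^ n) * ((a ^ 3 * b ^ n - b ^ 3 * a ^ n) * iteratedDeriv n P₁ x
          + (b * a ^ n - a * b ^ n) * iteratedDeriv n P₃ x)
        + (1 + (-1) ^ n) * a * b * ((a ^ n - b ^ n) * iteratedDeriv n P₂ x
          + (a ^ 2 * b ^ n - b ^ 2 * a ^ n) * iteratedDeriv n P₀ x))
        / (2 * a * b * (a ^ 2 - b ^ 2)) := by
  unfold biwaveFormula
  rw [iteratedDeriv_div_const]
  simp (disch := fun_prop) only [iteratedDeriv_fun_add, iteratedDeriv_fun_sub,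
    iteratedDeriv_const_mul_field]
  simp only [iteratedDeriv_evenWave_zero, iteratedDeriv_oddWave_zero, h₀, h₁, h₂, h₃]
  ring

theorem biwaveFormula_initial_values {a b : ℝ} (hD : 2 * a * b * (a ^ 2 - b ^ 2) ≠ 0)
    {P₀ P₁ P₂ P₃ : ℝ → ℝ} (h₀ : ContDiff ℝ 3 P₀) (h₁ : ContDiff ℝ 3 P₁) (h₂ : ContDiff ℝ 3 P₂)
    (h₃ : ContDiff ℝ 3 P₃) (x : ℝ) :
    biwaveFormula a b P₀ P₁ P₂ P₃ x 0 = P₀ x ∧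
      deriv (biwaveFormula a b P₀ P₁ P₂ P₃ x) 0 = deriv P₁ x ∧
      iteratedDeriv 2 (biwaveFormula a b P₀ P₁ P₂ P₃ x) 0 = iteratedDeriv 2 P₂ x ∧
      iteratedDeriv 3 (biwaveFormula a b P₀ P₁ P₂ P₃ x) 0 = iteratedDeriv 3 P₃ x := by
  have key (n : ℕ) (hn : n ≤ 3) := iteratedDeriv_biwaveFormula_zero (h₀.of_le (by exact_mod_cast hn))
    (h₁.of_le (by exact_mod_cast hn)) (h₂.of_le (by exact_mod_cast hn))
    (h₃.of_le (by exact_mod_cast hn)) a b x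
  refine ⟨?_, ?_, ?_, ?_⟩
  · have h := key 0 (by norm_num)
    simp only [iteratedDeriv_zero] at h
    rw [h, div_eq_iff hD]
    ring
  · rw [← iteratedDeriv_one, key 1 (by norm_num), iteratedDeriv_one, div_eq_iff hD]
    ring
  · rw [key 2 (by norm_num), div_eq_iff hD]
    ring
  · rw [key 3 (by norm_num), div_eq_iff hD]
    ring

/-- The explicit one-dimensional biwave solution formula satisfies the initial
conditions `u(x,0)=φ₀, ∂ₜu(x,0)=φ₁, ∂ₜ²u(x,0)=φ₂, ∂ₜ³u(x,0)=φ₃`. -/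
theorem biwave_1d_formula_initial_conditions (a b : ℝ) (hab : b < a) (hb : 0 < b)
    (φ₀ φ₁ φ₂ φ₃ : ℝ → ℝ)
    (h0 : ContDiff ℝ 4 φ₀) (h1 : ContDiff ℝ 3 φ₁) (h2 : ContDiff ℝ 2 φ₂)
    (h3 : ContDiff ℝ 1 φ₃)
    (u : ℝ → ℝ → ℝ)
    (hu : ∀ x t, u x t = (1 / (2 * a * b * (a ^ 2 - b ^ 2))) *
      (-(b ^ 3) * (∫ y in (x - a * t)..(x + a * t), φ₁ y)
        + a ^ 3 * (∫ y in (x - b * t)..(x + b * t), φ₁ y)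
        - a * b * (∫ y in (x - a * t)..(x - b * t), ∫ u' in (0:ℝ)..y, φ₂ u')
        + a * b * (∫ y in (x + b * t)..(x + a * t), ∫ u' in (0:ℝ)..y, φ₂ u')
        + b * (∫ y in (x - a * t)..(x + a * t), ∫ τ in (0:ℝ)..y, ∫ ω in (0:ℝ)..τ, φ₃ ω)
        - a * (∫ y in (x - b * t)..(x + b * t), ∫ τ in (0:ℝ)..y, ∫ ω in (0:ℝ)..τ, φ₃ ω)
        - a * b ^ 3 * φ₀ (x + a * t) - a * b ^ 3 * φ₀ (x - a * t)
        + a ^ 3 * b * φ₀ (x + b * t) + a ^ 3 * b * φ₀ (x - b * t))) :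
    ∀ x : ℝ,
      u x 0 = φ₀ x ∧
      deriv (fun t => u x t) 0 = φ₁ x ∧
      iteratedDeriv 2 (fun t => u x t) 0 = φ₂ x ∧
      iteratedDeriv 3 (fun t => u x t) 0 = φ₃ x := by
  intro x
  have hP₁ : ContDiff ℝ 3 (primitive φ₁) :=
    contDiff_primitive (h1.of_le (by norm_num) : ContDiff ℝ 2 φ₁)
  have hP₂ : ContDiff ℝ 3 (primitive (primitive φ₂)) :=
    contDiff_primitive (contDiff_primitive (h2.of_le (by norm_num) : ContDiff ℝ 1 φ₂))
  have hP₃ : ContDiff ℝ 3 (primitive (primitive (primitive φ₃))) :=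
    contDiff_primitive (contDiff_primitive (contDiff_primitive
      (h3.of_le (by norm_num) : ContDiff ℝ 0 φ₃)))
  have hux : (fun t => u x t) = biwaveFormula a b φ₀ (primitive φ₁) (primitive (primitive φ₂))
      (primitive (primitive (primitive φ₃))) x := by
    funext t
    simp only [hu, ← primitive.eq_def, intervalIntegral_eq_primitive_sub h1.continuous,
      intervalIntegral_eq_primitive_sub (continuous_primitive h2.continuous),
      intervalIntegral_eq_primitive_sub (continuous_primitive (continuous_primitive h3.continuous))]
    simp only [biwaveFormula, evenWave, oddWave]
    ring
  have hD : 2 * a * b * (a ^ 2 - b ^ 2) ≠ 0 := by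
    have ha : 0 < a := hb.trans hab
    exact (mul_pos (by positivity) (by nlinarith)).ne'
  obtain ⟨hu₀, hu₁, hu₂, hu₃⟩ :=
    biwaveFormula_initial_values hD (h0.of_le (by norm_num)) hP₁ hP₂ hP₃ x
  refine ⟨(congrFun hux 0).trans hu₀, ?_, ?_, ?_⟩
  · rw [hux, hu₁, deriv_primitive h1.continuous]
  · rw [hux, hu₂, iteratedDeriv_succ_primitive (continuous_primitive h2.continuous),
      iteratedDeriv_one, deriv_primitive h2.continuous]
  · rw [hux, hu₃, iteratedDeriv_succ_primitive (continuous_primitive (continuous_primitive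
      h3.continuous)), iteratedDeriv_succ_primitive (continuous_primitive h3.continuous),
      iteratedDeriv_one, deriv_primitive h3.continuous]
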